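/- Under Notation (*): let (J(H')^s : m) = p for a monomial m ∈ K[X] and prime p. Then (J(H)^s : m) = p if and only if (J(H̃)^s : m) = p, where H̃ = H_X is the induced subhypergraph of H on X. -/

import Mathlib

open MvPolynomial

noncomputable section

/-- A finite simple hypergraph on a vertex set `V`: edges are nonempty subsets of `V`
forming an antichain (a clutter). -/
structure FinHypergraph (σ : Type*) where
  V : Finset σ
  E : Finset (Finset σ)
  edge_sub : ∀ e ∈ E, e ⊆ V
  edge_nonempty : ∀ e ∈ E, e.Nonempty
  simple : ∀ e ∈ E, ∀ f ∈ E, e ⊆ f → e = f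

/-- The prime ideal generated by the variables indexed by `e`. -/
def primeOf {σ : Type*} (K : Type*) [Field K] (e : Finset σ) : Ideal (MvPolynomial σ K) :=
  Ideal.span ((fun i => (X i : MvPolynomial σ K)) '' e)

/-- The cover ideal of a set of edges: the intersection of the edge primes. -/
def coverIdeal {σ : Type*} (K : Type*) [Field K] (E : Finset (Finset σ)) :
    Ideal (MvPolynomial σ K) :=
  ⨅ e ∈ E, primeOf K e

/-- The squarefree monomial supported on `T`. -/
def xU {σ : Type*} (K : Type*) [Field K] (T : Finset σ) : MvPolynomial σ K :=
  ∏ i ∈ T, X i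
/-- `T` is a vertex cover of the edge set `E`. -/
def IsCover {σ : Type*} (E : Finset (Finset σ)) (T : Finset σ) : Prop :=
  ∀ e ∈ E, ∃ v ∈ e, v ∈ T

/-- `T` is a minimal vertex cover of the edge set `E`. -/
def IsMinimalCover {σ : Type*} (E : Finset (Finset σ)) (T : Finset σ) : Prop :=
  IsCover E T ∧ ∀ T' ⊂ T, ¬ IsCover E T'

/-- `m` is a minimal monomial generator of the monomial ideal `I`: it lies in `I`, and
every divisor of `m` lying in `I` is associated to `m`. -/
def IsMinMonGen {σ K : Type*} [Field K] (I : Ideal (MvPolynomial σ K))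
    (m : MvPolynomial σ K) : Prop :=
  m ∈ I ∧ ∀ d : MvPolynomial σ K, d ∣ m → d ∈ I → Associated d m

/-- `(V', E')` is a shadow of the hypergraph `H`. -/
def IsShadow {σ : Type*} [DecidableEq σ] (H : FinHypergraph σ) (V' : Finset σ) (E' : Finset (Finset σ)) : Prop :=
  V' ⊆ H.V ∧ (∀ e ∈ E', e ⊆ V') ∧ (∀ e ∈ E', e.Nonempty) ∧
    (∀ e ∈ E', ∀ f ∈ E', e ⊆ f → e = f) ∧
    E'.card = H.E.card ∧ ∀ e ∈ H.E, e ∩ V' ∈ E'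

/-- The cover ideal of a hypergraph on vertex set `V'` (edges `E'`, subsets of `V'`),
as an ideal of the small polynomial ring `K[V']`. -/
def smallCover {σ : Type*} [DecidableEq σ] (K : Type*) [Field K] (V' : Finset σ)
    (E' : Finset (Finset σ)) : Ideal (MvPolynomial {x : σ // x ∈ V'} K) :=
  ⨅ e ∈ E', primeOf K (e.subtype (· ∈ V'))

/-- `(V', E')` is an odd cycle graph `C_{2n+1}` for some positive `n`. -/
def IsOddCycle {σ : Type*} [DecidableEq σ] (V' : Finset σ) (E' : Finset (Finset σ)) : Prop :=
  ∃ n : ℕ, 0 < n ∧ ∃ f : Fin (2 * n + 1) → σ, Function.Injective f ∧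
    V' = Finset.univ.image f ∧ E' = Finset.univ.image (fun i => ({f i, f (i + 1)} : Finset σ))

/-!
Write `J' ≤ J ≤ J̃` for the cover ideals of `H'`, `H` and `H̃`: every edge of `H` contains an
edge of `H'`, and every edge of `H̃` is an edge of `H`.  Conversely `x_y J̃ ⊆ J`, since `e_y` is
the only edge of `H` missing from `H̃` and it contains `y`.  Hence
`p = (J'^s : m) ⊆ (J^s : m) ⊆ (J̃^s : m)` and `x_y^s (J̃^s : m) ⊆ (J^s : m)`, so the two
colon ideals agree with `p` together as soon as `x_y ∉ p`.  That holds because neither `J'` nor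
`m` involves `y`: specialising `x_y ↦ 1` would turn `x_y m ∈ J'^s` into `m ∈ J'^s`,
i.e. `p = ⊤`.
-/

open Function

namespace Submodule

theorem colon_eq_iff_colon_eq_of_le_of_smul_mem {R M : Type*} [CommRing R] [AddCommGroup M]
    [Module R M] {I J L : Submodule R M} {S : Set M} {p : Ideal R} [p.IsPrime] {a : R}
    (hIJ : I ≤ J) (hJL : J ≤ L) (haL : ∀ x ∈ L, a • x ∈ J) (ha : a ∉ p)
    (hI : I.colon S = p) :
    J.colon S = p ↔ L.colon S = p := by
  have hpJ : p ≤ J.colon S := hI ▸ colon_mono hIJ subset_rfl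
  have hJL' : J.colon S ≤ L.colon S := colon_mono hJL subset_rfl
  refine ⟨fun hJ => le_antisymm (fun u hu => ?_) (hJ ▸ hJL'),
    fun hL => le_antisymm (hL ▸ hJL') hpJ⟩
  have hau : a * u ∈ J.colon S :=
    mem_colon.mpr fun t ht => by rw [mul_smul]; exact haL _ (mem_colon.mp hu t ht)
  exact (Ideal.IsPrime.mem_or_mem ‹_› (hJ ▸ hau)).resolve_left ha

end Submodule

theorem Ideal.pow_mul_mem_pow_of_forall_mul_mem {R : Type*} [CommSemiring R] {I J : Ideal R}
    {a : R} (h : ∀ x ∈ I, a * x ∈ J) (n : ℕ) {x : R} (hx : x ∈ I ^ n) :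
    a ^ n * x ∈ J ^ n := by
  have hle : (span {a} * I) ^ n ≤ J ^ n :=
    pow_right_mono (span_singleton_mul_le_iff.mpr h) n
  rw [mul_pow, span_singleton_pow] at hle
  exact hle (mul_mem_mul (mem_span_singleton_self _) hx)

section CoverIdeal

variable {σ K : Type*} [Field K]

theorem mem_coverIdeal {E : Finset (Finset σ)} {x : MvPolynomial σ K} :
    x ∈ coverIdeal K E ↔ ∀ f ∈ E, x ∈ primeOf K f := by
  simp only [coverIdeal, Submodule.mem_iInf]

theorem X_mem_primeOf {e : Finset σ} {i : σ} (h : i ∈ e) :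
    (X i : MvPolynomial σ K) ∈ primeOf K e :=
  Ideal.subset_span ⟨i, h, rfl⟩

theorem primeOf_mono {e f : Finset σ} (h : e ⊆ f) : primeOf K e ≤ primeOf K f :=
  Ideal.span_mono (Set.image_mono h)

theorem coverIdeal_le_coverIdeal {E E' : Finset (Finset σ)}
    (h : ∀ f ∈ E, ∃ g ∈ E', g ⊆ f) : coverIdeal K E' ≤ coverIdeal K E := fun _ hx =>
  mem_coverIdeal.mpr fun f hf => by
    obtain ⟨g, hg, hgf⟩ := h f hf
    exact primeOf_mono hgf (mem_coverIdeal.mp hx g hg)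

theorem X_mul_mem_coverIdeal_of_mem_coverIdeal_erase [DecidableEq σ] {E : Finset (Finset σ)}
    {e : Finset σ} {y : σ} (hy : y ∈ e) {x : MvPolynomial σ K}
    (hx : x ∈ coverIdeal K (E.erase e)) : X y * x ∈ coverIdeal K E :=
  mem_coverIdeal.mpr fun f hf => by
    rcases eq_or_ne f e with rfl | hfe
    · exact Ideal.mul_mem_right _ _ (X_mem_primeOf hy)
    · exact Ideal.mul_mem_left _ _ (mem_coverIdeal.mp hx f (Finset.mem_erase.mpr ⟨hfe, hf⟩))

variable [DecidableEq σ]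

variable (K) in
def specializeOne (y : σ) : MvPolynomial σ K →ₐ[K] MvPolynomial σ K :=
  aeval (update X y 1)

theorem specializeOne_X_self (y : σ) : specializeOne K y (X y) = 1 := by
  rw [specializeOne, aeval_X, update_self]

theorem specializeOne_X_of_ne {y i : σ} (h : i ≠ y) : specializeOne K y (X i) = X i := by
  rw [specializeOne, aeval_X, update_of_ne h]

theorem specializeOne_monomial {d : σ →₀ ℕ} {y : σ} (hy : y ∉ d.support) :
    specializeOne K y (monomial d 1) = monomial d 1 := by
  rw [specializeOne, aeval_monomial, map_one, one_mul, monomial_eq, C_1, one_mul]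
  exact Finsupp.prod_congr fun i hi => by rw [update_of_ne (ne_of_mem_of_not_mem hi hy)]

theorem map_specializeOne_coverIdeal_le {E : Finset (Finset σ)} {y : σ}
    (hy : ∀ f ∈ E, y ∉ f) : (coverIdeal K E).map (specializeOne K y) ≤ coverIdeal K E := by
  refine Ideal.map_le_iff_le_comap.mpr fun x hx => mem_coverIdeal.mpr fun f hf => ?_
  have hprime : primeOf K f ≤ (primeOf K f).comap (specializeOne K y) := by
    refine Ideal.span_le.mpr ?_
    rintro _ ⟨i, hi, rfl⟩
    rw [SetLike.mem_coe, Ideal.mem_comap, specializeOne_X_of_ne (ne_of_mem_of_not_mem hi (hy f hf))]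
    exact X_mem_primeOf hi
  exact hprime (mem_coverIdeal.mp hx f hf)

theorem colon_eq_top_of_X_mem_colon {I : Ideal (MvPolynomial σ K)} {y : σ} {d : σ →₀ ℕ}
    (hI : I.map (specializeOne K y) ≤ I) (hy : y ∉ d.support)
    (hX : X y ∈ I.colon (Ideal.span {monomial d (1 : K)} : Set (MvPolynomial σ K))) :
    I.colon (Ideal.span {monomial d (1 : K)} : Set (MvPolynomial σ K)) = ⊤ := by
  have hXm := Ideal.mem_map_of_mem (specializeOne K y) (Submodule.mem_colon_span_singleton.mp hX)
  rw [smul_eq_mul, map_mul, specializeOne_X_self, one_mul, specializeOne_monomial hy] at hXm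
  exact (Ideal.eq_top_iff_one _).mpr
    (Submodule.mem_colon_span_singleton.mpr (by simpa using hI hXm))

end CoverIdeal

theorem FinHypergraph.filter_subset_erase_eq_erase {σ : Type*} [DecidableEq σ]
    (H : FinHypergraph σ) {y : σ} {ey : Finset σ} (hyey : y ∈ ey)
    (huniq : ∀ f ∈ H.E, y ∈ f → f = ey) :
    H.E.filter (fun f => f ⊆ H.V.erase y) = H.E.erase ey := by
  ext f
  simp only [Finset.mem_filter, Finset.mem_erase, Finset.subset_erase]
  constructor
  · rintro ⟨hf, -, hyf⟩
    exact ⟨fun h => hyf (h ▸ hyey), hf⟩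
  · rintro ⟨hne, hf⟩
    exact ⟨hf, H.edge_sub f hf, fun hyf => hne (huniq f hf hyf)⟩

/- `H'` and `H̃` are encoded by their edge sets `insert (ey.erase y) (H.E.erase ey)` and
`H.E.filter (· ⊆ H.V.erase y)`; their cover ideals live in the ambient ring `K[V]`, generated by
the same monomials as in `K[X]`. -/
theorem colon_eq_iff_colon_induced_eq {σ K : Type*} [DecidableEq σ] [Field K]
    (H : FinHypergraph σ) (y : σ) (ey : Finset σ)
    (hyey : y ∈ ey)
    (huniq : ∀ f ∈ H.E, y ∈ f → f = ey)
    (s : ℕ) (d : σ →₀ ℕ) (hd : d.support ⊆ H.V.erase y)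
    (p : Ideal (MvPolynomial σ K)) (hp : p.IsPrime)
    (hcolon : ((coverIdeal K (insert (ey.erase y) (H.E.erase ey))) ^ s).colon
        (Ideal.span {(monomial d (1 : K) : MvPolynomial σ K)}) = p) :
    (((coverIdeal K H.E) ^ s).colon
        (Ideal.span {(monomial d (1 : K) : MvPolynomial σ K)}) = p ↔
      ((coverIdeal K (H.E.filter (fun f => f ⊆ H.V.erase y))) ^ s).colon
        (Ideal.span {(monomial d (1 : K) : MvPolynomial σ K)}) = p) := by
  rw [H.filter_subset_erase_eq_erase hyey huniq]
  have hshadow_le : coverIdeal K (insert (ey.erase y) (H.E.erase ey)) ≤ coverIdeal K H.E :=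
    coverIdeal_le_coverIdeal fun f hf => by
      rcases eq_or_ne f ey with rfl | hne
      · exact ⟨f.erase y, Finset.mem_insert_self _ _, Finset.erase_subset _ _⟩
      · exact ⟨f, Finset.mem_insert_of_mem (Finset.mem_erase.mpr ⟨hne, hf⟩), subset_rfl⟩
  have hle_induced : coverIdeal K H.E ≤ coverIdeal K (H.E.erase ey) :=
    coverIdeal_le_coverIdeal fun f hf => ⟨f, Finset.mem_of_mem_erase hf, subset_rfl⟩
  have hy_shadow : ∀ f ∈ insert (ey.erase y) (H.E.erase ey), y ∉ f := by
    simp only [Finset.mem_insert, Finset.mem_erase]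
    rintro f (rfl | ⟨hne, hf⟩)
    · exact fun h => (Finset.mem_erase.mp h).1 rfl
    · exact fun hyf => hne (huniq f hf hyf)
  have hXy : X y ^ s ∉ p := fun h => hp.ne_top <| hcolon ▸ colon_eq_top_of_X_mem_colon
    (by
      rw [Ideal.map_pow]
      exact Ideal.pow_right_mono (map_specializeOne_coverIdeal_le hy_shadow) s)
    (fun hy => (Finset.mem_erase.mp (hd hy)).1 rfl) (hcolon ▸ hp.mem_of_pow_mem s h)
  exact Submodule.colon_eq_iff_colon_eq_of_le_of_smul_mem
    (Ideal.pow_right_mono hshadow_le s) (Ideal.pow_right_mono hle_induced s)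
    (fun _ => Ideal.pow_mul_mem_pow_of_forall_mul_mem
      (fun _ => X_mul_mem_coverIdeal_of_mem_coverIdeal_erase hyey) s) hXy hcolon
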